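/- Under the same setting, the Gaussian rectangle probability ∫_R f(y) dy is bounded below by (λmin^{k/2}/√(det Σ)) · ∏_{l=1}^k Pr{Z_l ∈ [(a_l-μ_l)/√λmin, (b_l-μ_l)/√λmin]}, where λmin is the smallest eigenvalue of Σ and Z_l are independent standard Gaussians. -/

import Mathlib

open Matrix MeasureTheory Real

/-!
Since `Σ⁻¹ ≤ λmin⁻¹ • 1` in the Loewner order, the exponent of `f` is at least that of the
isotropic Gaussian with covariance `λmin • 1`. Hence `f` dominates `λmin^{k/2} / √(det Σ)` times
that isotropic density, whose integral over the rectangle factors into one-dimensional integrals,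
each a standard normal probability after the substitution `z = (y_l - μ_l) / √λmin`.
-/

open scoped MatrixOrder in
theorem Matrix.PosDef.inv_le_algebraMap_inv {n : Type*} [Fintype n] [DecidableEq n]
    {S : Matrix n n ℝ} (hS : S.PosDef) {lam : ℝ} (hlam : 0 < lam)
    (hle : ∀ i, lam ≤ hS.1.eigenvalues i) :
    S⁻¹ ≤ algebraMap ℝ _ lam⁻¹ := by
  rw [le_algebraMap_iff_spectrum_le hS.inv.isHermitian.isSelfAdjoint]
  intro x hx
  have hx' : x⁻¹ ∈ spectrum ℝ S := by
    rw [← hS.isUnit.unit_spec, spectrum.inv₀_mem_iff, coe_units_inv]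
    exact hx
  obtain ⟨i, hi⟩ := hS.1.spectrum_real_eq_range_eigenvalues ▸ hx'
  have hlam_le : lam ≤ x⁻¹ := hi ▸ hle i
  exact (le_inv_comm₀ hlam (inv_pos.mp (hlam.trans_le hlam_le))).mp hlam_le

theorem Matrix.PosDef.dotProduct_inv_mulVec_le {n : Type*} [Fintype n] [DecidableEq n]
    {S : Matrix n n ℝ} (hS : S.PosDef) {lam : ℝ} (hlam : 0 < lam)
    (hle : ∀ i, lam ≤ hS.1.eigenvalues i) (x : n → ℝ) :
    x ⬝ᵥ (S⁻¹ *ᵥ x) ≤ lam⁻¹ * (x ⬝ᵥ x) := by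
  have := (le_iff.mp (hS.inv_le_algebraMap_inv hlam hle)).dotProduct_mulVec_nonneg x
  simpa [Algebra.algebraMap_eq_smul_one, sub_mulVec, dotProduct_sub, smul_mulVec] using this

theorem Real.sqrt_pow {x : ℝ} (hx : 0 ≤ x) (n : ℕ) : √(x ^ n) = √x ^ n := by
  rw [sqrt_eq_iff_eq_sq (by positivity) (by positivity), ← pow_mul, mul_comm, pow_mul, sq_sqrt hx]

theorem prod_exp_neg_sq_div_two {ι : Type*} [Fintype ι] (x : ι → ℝ) (σ : ℝ) :
    ∏ i, exp (-(x i / σ) ^ 2 / 2) = exp (-(1 / 2) * ((σ ^ 2)⁻¹ * (x ⬝ᵥ x))) := by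
  rw [← exp_sum, dotProduct, Finset.mul_sum, Finset.mul_sum]
  congr 1
  refine Finset.sum_congr rfl fun i _ => ?_
  ring

theorem rpow_div_sqrt_mul_prod_exp_neg_sq {ι : Type*} [Fintype ι] {lam d : ℝ} (hlam : 0 < lam)
    (hd : 0 ≤ d) (x : ι → ℝ) :
    lam ^ ((Fintype.card ι : ℝ) / 2) / √d *
        ∏ i, (√lam)⁻¹ * (exp (-(x i / √lam) ^ 2 / 2) / √(2 * π)) =
      exp (-(1 / 2) * (lam⁻¹ * (x ⬝ᵥ x))) / √(d * (2 * π) ^ Fintype.card ι) := by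
  simp only [Finset.prod_mul_distrib, Finset.prod_div_distrib, Finset.prod_const,
    Finset.card_univ, prod_exp_neg_sq_div_two, sq_sqrt hlam.le, rpow_div_two_eq_sqrt _ hlam.le,
    rpow_natCast, sqrt_mul hd, sqrt_pow two_pi_pos.le]
  rw [div_mul_eq_mul_div, ← mul_assoc, ← mul_pow, mul_inv_cancel₀ (sqrt_pos.mpr hlam).ne',
    one_pow, one_mul, div_div, mul_comm (√(2 * π) ^ _)]

theorem setIntegral_univ_pi_prod {ι 𝕜 : Type*} [Fintype ι] [RCLike 𝕜] {E : ι → Type*}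
    [∀ i, MeasureSpace (E i)] [∀ i, SigmaFinite (volume : Measure (E i))]
    (t : ∀ i, Set (E i)) (f : ∀ i, E i → 𝕜) :
    ∫ x in Set.univ.pi t, ∏ i, f i (x i) = ∏ i, ∫ x in t i, f i x := by
  rw [volume_pi, Measure.restrict_pi_pi, integral_fintype_prod_eq_prod]

theorem setIntegral_Icc_comp_sub_div {E : Type*} [NormedAddCommGroup E] [NormedSpace ℝ E]
    (g : ℝ → E) {σ : ℝ} (hσ : 0 < σ) (m A B : ℝ) :
    ∫ x in Set.Icc A B, σ⁻¹ • g ((x - m) / σ) =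
      ∫ z in Set.Icc ((A - m) / σ) ((B - m) / σ), g z := by
  rcases le_or_gt A B with hAB | hBA
  · have hAB' : (A - m) / σ ≤ (B - m) / σ := by gcongr
    rw [integral_Icc_eq_integral_Ioc, integral_Icc_eq_integral_Ioc,
      ← intervalIntegral.integral_of_le hAB, ← intervalIntegral.integral_of_le hAB',
      intervalIntegral.integral_smul, intervalIntegral.integral_comp_sub_right (fun x => g (x / σ)),
      intervalIntegral.integral_comp_div g hσ.ne', inv_smul_smul₀ hσ.ne']
  · have hBA' : (B - m) / σ < (A - m) / σ := by gcongr
    rw [Set.Icc_eq_empty hBA.not_ge, Set.Icc_eq_empty hBA'.not_ge]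
    simp

theorem gaussian_rectangle_lower_bound {k : ℕ} [NeZero k]
    (S : Matrix (Fin k) (Fin k) ℝ) (hS : S.PosDef) (mu : Fin k → ℝ)
    (lammin : ℝ)
    (hmin : lammin = Finset.univ.inf' Finset.univ_nonempty hS.1.eigenvalues)
    (a b : Fin k → ℝ)
    (f : (Fin k → ℝ) → ℝ)
    (hf : f = fun y => Real.exp (-(1/2) * ((y - mu) ⬝ᵥ (S⁻¹ *ᵥ (y - mu)))) /
      Real.sqrt (S.det * (2 * Real.pi) ^ k)) :
    ∫ y in Set.univ.pi (fun l => Set.Icc (a l) (b l)), f y ≥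
      lammin ^ ((k : ℝ) / 2) / Real.sqrt S.det *
        ∏ l, ∫ z in Set.Icc ((a l - mu l) / Real.sqrt lammin)
          ((b l - mu l) / Real.sqrt lammin),
          Real.exp (-(z ^ 2) / 2) / Real.sqrt (2 * Real.pi) := by
  have hle : ∀ i, lammin ≤ hS.1.eigenvalues i := fun i => hmin ▸ Finset.inf'_le _ (Finset.mem_univ i)
  have hlam : 0 < lammin := by
    obtain ⟨i, -, hi⟩ := Finset.univ.exists_mem_eq_inf' Finset.univ_nonempty hS.1.eigenvalues
    exact hmin ▸ hi ▸ hS.eigenvalues_pos i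
  set φ : ℝ → ℝ := fun z => exp (-(z ^ 2) / 2) / √(2 * π)
  set c := lammin ^ ((k : ℝ) / 2) / √S.det
  set g : (Fin k → ℝ) → ℝ := fun y => c * ∏ l, (√lammin)⁻¹ • φ ((y l - mu l) / √lammin)
  have hgf : ∀ y, g y ≤ f y := by
    intro y
    have hg := rpow_div_sqrt_mul_prod_exp_neg_sq hlam hS.det_pos.le (y - mu)
    simp only [Fintype.card_fin, Pi.sub_apply] at hg
    simp only [g, φ, c, smul_eq_mul, hg, hf]
    gcongr exp ?_ / _
    linarith [hS.dotProduct_inv_mulVec_le hlam hle (y - mu)]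
  have hR : IsCompact (Set.univ.pi fun l => Set.Icc (a l) (b l)) :=
    isCompact_univ_pi fun _ => isCompact_Icc
  have hf_cont : Continuous f := hf ▸ by fun_prop
  calc c * ∏ l, ∫ z in Set.Icc ((a l - mu l) / √lammin) ((b l - mu l) / √lammin), φ z
      = ∫ y in Set.univ.pi (fun l => Set.Icc (a l) (b l)), g y := by
        rw [integral_const_mul,
          setIntegral_univ_pi_prod _ fun l z => (√lammin)⁻¹ • φ ((z - mu l) / √lammin)]
        simp_rw [setIntegral_Icc_comp_sub_div φ (sqrt_pos.mpr hlam)]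
    _ ≤ ∫ y in Set.univ.pi (fun l => Set.Icc (a l) (b l)), f y :=
        setIntegral_mono_on ((by fun_prop : Continuous g).continuousOn.integrableOn_compact hR)
          (hf_cont.continuousOn.integrableOn_compact hR)
          (MeasurableSet.univ_pi fun _ => measurableSet_Icc) fun y _ => hgf y
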